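/- Let n ≥ 5 and let L = F2(β_4,…,β_n,γ) be an n-dimensional complex filiform Leibniz algebra of the second family. For any pre-derivation P of L, writing P(e_3) = Σ_{t=1}^n c_t e_t in the basis e_1,…,e_n, one has c_1 = 0 and c_2 β_t = 0 for all 4 ≤ t ≤ n−1. -/

import Mathlib

open Finset

/-- The basis vector `e_i` (1-indexed) of `ℂ^n`; zero if `i` is out of range. -/
noncomputable def E (n : ℕ) (i : ℕ) : Fin n → ℂ :=
  if h : 1 ≤ i ∧ i ≤ n then Pi.single (⟨i - 1, by omega⟩ : Fin n) 1 else 0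

/-- The bilinear bracket on `ℂ^n` determined by the products `m i j` of the
(1-indexed) basis vectors `e_i`, `e_j`. -/
noncomputable def bracketOf (n : ℕ) (m : ℕ → ℕ → Fin n → ℂ)
    (x y : Fin n → ℂ) : Fin n → ℂ :=
  ∑ i : Fin n, ∑ j : Fin n, (x i * y j) • m (i.1 + 1) (j.1 + 1)

/-- `P` is a pre-derivation of the algebra with bracket `br`. -/
def IsPreDeriv (n : ℕ) (br : (Fin n → ℂ) → (Fin n → ℂ) → Fin n → ℂ)
    (P : Module.End ℂ (Fin n → ℂ)) : Prop :=
  ∀ x y z, P (br (br x y) z) =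
    br (br (P x) y) z + br (br x (P y)) z + br (br x y) (P z)

/-- Multiplication table of the second family `F2(β₄,…,βₙ,γ)` of filiform Leibniz
algebras: `[e₁,e₁]=e₃`; `[eᵢ,e₁]=e_{i+1}` for `3 ≤ i ≤ n-1`;
`[e₁,e₂]=∑_{t=4}^{n} β_t e_t`; `[e₂,e₂]=γ eₙ`;
`[eⱼ,e₂]=∑_{t=j+2}^{n} β_{t-j+2} e_t` for `3 ≤ j ≤ n-2`; all other products zero. -/
noncomputable def F2mul (n : ℕ) (β : ℕ → ℂ) (γ : ℂ) (i j : ℕ) : Fin n → ℂ :=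
  if i = 1 ∧ j = 1 then E n 3
  else if 3 ≤ i ∧ i ≤ n - 1 ∧ j = 1 then E n (i + 1)
  else if i = 1 ∧ j = 2 then ∑ t ∈ Icc 4 n, β t • E n t
  else if i = 2 ∧ j = 2 then γ • E n n
  else if 3 ≤ i ∧ i ≤ n - 2 ∧ j = 2 then ∑ t ∈ Icc (i + 2) n, β (t - i + 2) • E n t
  else 0

/-!
Apply the pre-derivation identity to `[[e₁, e₁], e₃]`. Every product `[x, e₃]` vanishes, so
three of the four terms are zero and what is left is `[e₃, P e₃] = 0`, since `[e₁, e₁] = e₃`.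
Only `e₁` and `e₂` multiply `e₃` from the right, so
`[e₃, P e₃] = c₁ e₄ + c₂ ∑_{t ≥ 5} β_{t-1} e_t`; its coordinates are `c₁` and the `c₂ β_t`.
-/

theorem E_apply (n i : ℕ) (k : Fin n) : E n i k = if k.1 + 1 = i then 1 else 0 := by
  unfold E
  split_ifs <;> simp [Pi.single_apply, Fin.ext_iff] <;> omega

theorem sum_smul_E_apply (n : ℕ) (s : Finset ℕ) (f : ℕ → ℂ) (k : Fin n) :
    (∑ t ∈ s, f t • E n t) k = if k.1 + 1 ∈ s then f (k.1 + 1) else 0 := by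
  simp only [Finset.sum_apply, Pi.smul_apply, E_apply, smul_eq_mul, mul_ite, mul_one, mul_zero]
  exact Finset.sum_ite_eq s _ f

section bracketOf

variable {n : ℕ} (m : ℕ → ℕ → Fin n → ℂ)

theorem bracketOf_E_left {a : ℕ} (ha₁ : 1 ≤ a) (ha₂ : a ≤ n) (y : Fin n → ℂ) :
    bracketOf n m (E n a) y = ∑ j : Fin n, y j • m a (j.1 + 1) := by
  unfold bracketOf
  rw [Fintype.sum_eq_single (⟨a - 1, by omega⟩ : Fin n)]
  · simp only [E_apply, show a - 1 + 1 = a by omega, if_true, one_mul]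
  · intro i hi
    have : i.1 + 1 ≠ a := fun h => hi (Fin.ext <| show i.1 = a - 1 by omega)
    simp [E_apply, this]

theorem bracketOf_E_E {a b : ℕ} (ha₁ : 1 ≤ a) (ha₂ : a ≤ n) (hb₁ : 1 ≤ b) (hb₂ : b ≤ n) :
    bracketOf n m (E n a) (E n b) = m a b := by
  rw [bracketOf_E_left m ha₁ ha₂, Fintype.sum_eq_single (⟨b - 1, by omega⟩ : Fin n)]
  · simp [E_apply, show b - 1 + 1 = b by omega]
  · intro j hj
    have : j.1 + 1 ≠ b := fun h => hj (Fin.ext <| show j.1 = b - 1 by omega)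
    simp [E_apply, this]

theorem bracketOf_E_right_eq_zero {b : ℕ} (hb : ∀ i, m i b = 0) (x : Fin n → ℂ) :
    bracketOf n m x (E n b) = 0 := by
  refine Finset.sum_eq_zero fun i _ => Finset.sum_eq_zero fun j _ => ?_
  by_cases hj : j.1 + 1 = b
  · rw [hj, hb, smul_zero]
  · simp [E_apply, hj]

end bracketOf

theorem IsPreDeriv.bracket_bracket_apply_eq_zero {n : ℕ}
    {br : (Fin n → ℂ) → (Fin n → ℂ) → Fin n → ℂ} {P : Module.End ℂ (Fin n → ℂ)}
    (hP : IsPreDeriv n br P) {z : Fin n → ℂ} (hz : ∀ w, br w z = 0) (a b : Fin n → ℂ) :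
    br (br a b) (P z) = 0 := by
  simpa [hz] using (hP a b z).symm

section F2mul

variable (n : ℕ) (β : ℕ → ℂ) (γ : ℂ)

theorem F2mul_one_one : F2mul n β γ 1 1 = E n 3 := by
  simp [F2mul]

theorem F2mul_three_one (hn : 4 ≤ n) : F2mul n β γ 3 1 = E n 4 := by
  rw [F2mul, if_neg (by omega), if_pos ⟨le_rfl, by omega, rfl⟩]

theorem F2mul_three_two (hn : 5 ≤ n) :
    F2mul n β γ 3 2 = ∑ t ∈ Icc 5 n, β (t - 1) • E n t := by
  rw [F2mul, if_neg (by omega), if_neg (by omega), if_neg (by omega), if_neg (by omega),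
    if_pos ⟨le_rfl, by omega, rfl⟩]
  exact Finset.sum_congr rfl fun t ht => by rw [show t - 3 + 2 = t - 1 by simp at ht; omega]

theorem F2mul_three_of_three_le {j : ℕ} (hj : 3 ≤ j) : F2mul n β γ 3 j = 0 := by
  rw [F2mul, if_neg (by omega), if_neg (by omega), if_neg (by omega), if_neg (by omega),
    if_neg (by omega)]

theorem F2mul_three_right (i : ℕ) : F2mul n β γ i 3 = 0 := by
  simp [F2mul]

theorem bracketOf_F2mul_E_three_sum (hn : 5 ≤ n) (c : ℕ → ℂ) :
    bracketOf n (F2mul n β γ) (E n 3) (∑ t ∈ Icc 1 n, c t • E n t) =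
      c 1 • E n 4 + c 2 • ∑ t ∈ Icc 5 n, β (t - 1) • E n t := by
  have hcoord (j : Fin n) : (∑ t ∈ Icc 1 n, c t • E n t) j = c (j.1 + 1) := by
    rw [sum_smul_E_apply, if_pos (mem_Icc.mpr ⟨by omega, by omega⟩)]
  simp only [bracketOf_E_left _ (by norm_num : 1 ≤ 3) (by omega : 3 ≤ n), hcoord,
    Fin.sum_univ_eq_sum_range (fun j => c (j + 1) • F2mul n β γ 3 (j + 1))]
  rw [Finset.sum_eq_add_of_mem 0 1 (by simp; omega) (by simp; omega) zero_ne_one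
      fun j _ hj => by rw [F2mul_three_of_three_le n β γ (by omega), smul_zero],
    F2mul_three_one n β γ (by omega), F2mul_three_two n β γ hn]

end F2mul

theorem stmt_13_general (n : ℕ) (hn : 5 ≤ n) (β : ℕ → ℂ) (γ : ℂ)
    (P : Module.End ℂ (Fin n → ℂ))
    (hP : IsPreDeriv n (bracketOf n (F2mul n β γ)) P)
    (c : ℕ → ℂ) (hc : P (E n 3) = ∑ t ∈ Icc 1 n, c t • E n t) :
    c 1 = 0 ∧ ∀ t, 4 ≤ t → t ≤ n - 1 → c 2 * β t = 0 := by
  have hannih : ∀ w, bracketOf n (F2mul n β γ) w (E n 3) = 0 :=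
    bracketOf_E_right_eq_zero _ (F2mul_three_right n β γ)
  have h := hP.bracket_bracket_apply_eq_zero hannih (E n 1) (E n 1)
  rw [bracketOf_E_E _ le_rfl (by omega) le_rfl (by omega), F2mul_one_one, hc,
    bracketOf_F2mul_E_three_sum n β γ hn] at h
  have hcoord : ∀ k : Fin n,
      c 1 * E n 4 k + c 2 * (if k.1 + 1 ∈ Icc 5 n then β k.1 else 0) = 0 := fun k => by
    simpa only [sum_smul_E_apply, Pi.add_apply, Pi.smul_apply, smul_eq_mul,
      show k.1 + 1 - 1 = k.1 by omega, mul_ite, mul_zero, Pi.zero_apply] using congrFun h k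
  have hc1 : c 1 = 0 := by simpa [E_apply] using hcoord ⟨3, by omega⟩
  refine ⟨hc1, fun t ht₄ htn => ?_⟩
  simpa [hc1, show 5 ≤ t + 1 by omega, show t + 1 ≤ n by omega] using hcoord ⟨t, by omega⟩

/-- For any pre-derivation `P` of a second-family filiform Leibniz algebra,
writing `P(e₃) = ∑ cₜ eₜ`, one has `c₁ = 0` and `c₂ βₜ = 0` for `4 ≤ t ≤ n-1`. -/
theorem stmt_13 (n : ℕ) (hn : 5 ≤ n) (β : ℕ → ℂ) (γ : ℂ)
    (hleib : ∀ x y z : Fin n → ℂ,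
      bracketOf n (F2mul n β γ) (bracketOf n (F2mul n β γ) x y) z =
        bracketOf n (F2mul n β γ) (bracketOf n (F2mul n β γ) x z) y +
        bracketOf n (F2mul n β γ) x (bracketOf n (F2mul n β γ) y z))
    (P : Module.End ℂ (Fin n → ℂ))
    (hP : IsPreDeriv n (bracketOf n (F2mul n β γ)) P)
    (c : ℕ → ℂ) (hc : P (E n 3) = ∑ t ∈ Icc 1 n, c t • E n t) :
    c 1 = 0 ∧ ∀ t, 4 ≤ t → t ≤ n - 1 → c 2 * β t = 0 :=
  stmt_13_general n hn β γ P hP c hc
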